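/- arXiv:2003.10345 — 4 statements merged into one kernel-verified Lean document; each statement's English description precedes it below -/
import Mathlib

section
/- Let V be a finite-dimensional real vector space with a symplectic (non-degenerate antisymmetric) bilinear form ω, and let G be a positive-definite symmetric bilinear form on V satisfying G(ξ,ξ)·G(η,η) ≥ ω(ξ,η)² for all ξ, η ∈ V. Then there exists a complex structure J on V (J² = −1) compatible with ω (i.e., ω(·, J·) is a positive-definite symmetric form and ω(Jξ,Jη)=ω(ξ,η)) such that G is J-invariant and the bilinear form ρ(ξ,η) := G(ξ,η) − ω(ξ,Jη) is symmetric and positive semidefinite. -/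
/-!
View `G` as an inner product and write `ω ξ η = ⟪A ξ, η⟫`; alternation and nondegeneracy of `ω`
make `A` skew and injective. The polar part `J = A (-A²)^{-1/2}` of `A`, built in an eigenbasis of
the positive symmetric map `-A² = AᵀA`, is an orthogonal complex structure commuting with `A`.
Hence `ω (J ξ) (J η) = ω ξ η`, and `ω ξ (J η) = ⟪(-A²)^{1/2} ξ, η⟫` is symmetric positive
definite.
Finally, the hypothesis at `η = J ξ` reads `ω(ξ, J ξ)² ≤ G(ξ, ξ)²`, so `ρ(ξ, ξ) ≥ 0`.
-/

open RealInnerProductSpace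

namespace OrthonormalBasis

variable {ι V : Type*} [Fintype ι] [DecidableEq ι] [NormedAddCommGroup V] [InnerProductSpace ℝ V]
  (b : OrthonormalBasis ι ℝ V)

noncomputable def diagMap (d : ι → ℝ) : V →ₗ[ℝ] V :=
  b.repr.symm.toLinearMap ∘ₗ Matrix.toLpLin 2 2 (Matrix.diagonal d) ∘ₗ b.repr.toLinearMap

@[simp]
theorem repr_diagMap (d : ι → ℝ) (v : V) (i : ι) : b.repr (b.diagMap d v) i = d i * b.repr v i := by
  simp [diagMap, Matrix.toLpLin_apply, Matrix.mulVec_diagonal]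

theorem diagMap_apply_self (d : ι → ℝ) (i : ι) : b.diagMap d (b i) = d i • b i := by
  apply b.repr.injective
  ext j
  by_cases h : j = i <;> simp [b.repr_self, h]

theorem diagMap_mul (d e : ι → ℝ) : b.diagMap (d * e) = b.diagMap d * b.diagMap e := by
  ext v
  apply b.repr.injective
  ext i
  simp [mul_assoc]

theorem diagMap_one : b.diagMap 1 = 1 := by
  ext v
  apply b.repr.injective
  ext i
  simp

theorem inner_diagMap (d : ι → ℝ) (x y : V) :
    ⟪x, b.diagMap d y⟫ = ∑ i, d i * (b.repr x i * b.repr y i) := by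
  simp only [← b.repr.inner_map_map, PiLp.inner_apply, repr_diagMap, RCLike.inner_apply,
    conj_trivial]
  exact Finset.sum_congr rfl fun i _ => by ring

theorem isSymmetric_diagMap (d : ι → ℝ) : (b.diagMap d).IsSymmetric := fun x y => by
  rw [real_inner_comm, inner_diagMap, inner_diagMap]
  simp only [mul_comm (b.repr x _)]

theorem inner_diagMap_self_pos {d : ι → ℝ} (hd : ∀ i, 0 < d i) {x : V} (hx : x ≠ 0) :
    0 < ⟪x, b.diagMap d x⟫ := by
  obtain ⟨i, hi⟩ : ∃ i, b.repr x i ≠ 0 := by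
    by_contra! h
    exact hx (b.repr.map_eq_zero_iff.mp (by ext i; simp [h i]))
  rw [inner_diagMap]
  exact Finset.sum_pos' (fun j _ => mul_nonneg (hd j).le (mul_self_nonneg _))
    ⟨i, Finset.mem_univ i, mul_pos (hd i) (mul_self_pos.mpr hi)⟩

-- `S` only mixes basis vectors on which `μ` takes the same value.
theorem commute_diagMap_comp {S : V →ₗ[ℝ] V} {μ : ι → ℝ} (hS : Commute S (b.diagMap μ))
    (f : ℝ → ℝ) : Commute S (b.diagMap (f ∘ μ)) := by
  have entry (i j : ι) : μ j * b.repr (S (b j)) i = μ i * b.repr (S (b j)) i := by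
    simpa [diagMap_apply_self] using
      congr_arg (fun v => b.repr v i) (LinearMap.congr_fun hS.eq (b j))
  refine b.toBasis.ext fun j => b.repr.injective (PiLp.ext fun i => ?_)
  rcases eq_or_ne (b.repr (S (b j)) i) 0 with h | h
  · simp [diagMap_apply_self, h]
  · simp [diagMap_apply_self, mul_right_cancel₀ h (entry i j)]

end OrthonormalBasis

section Polar

variable {V : Type*} [NormedAddCommGroup V] [InnerProductSpace ℝ V]

theorem inner_map_map_of_skew {J : V →ₗ[ℝ] V} (hJJ : J * J = -1)
    (hJ : ∀ x y, ⟪J x, y⟫ = -⟪x, J y⟫) (x y : V) : ⟪J x, J y⟫ = ⟪x, y⟫ := by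
  rw [hJ, ← Module.End.mul_apply, hJJ]
  simp

variable [FiniteDimensional ℝ V]

theorem exists_inner_left_eq (ω : LinearMap.BilinForm ℝ V) :
    ∃ A : V →ₗ[ℝ] V, ∀ x y, ⟪A x, y⟫ = ω x y :=
  ⟨(InnerProductSpace.toDual ℝ V).symm.toLinearMap ∘ₗ
      LinearMap.toContinuousLinearMap.toLinearMap ∘ₗ ω,
    fun x y => by simp [InnerProductSpace.toDual_symm_apply]⟩

-- `J = A (-A²)^{-1/2}` and `P = (-A²)^{1/2}`, computed in an eigenbasis of `-A²`.
theorem exists_polar_of_skew {A : V →ₗ[ℝ] V} (hA : ∀ x y, ⟪A x, y⟫ = -⟪x, A y⟫)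
    (hA_inj : Function.Injective A) :
    ∃ J P : V →ₗ[ℝ] V, A = J * P ∧ J * J = -1 ∧ (∀ x y, ⟪J x, y⟫ = -⟪x, J y⟫) ∧
      Commute J A ∧ ∀ x, x ≠ 0 → 0 < ⟪x, P x⟫ := by
  set T : V →ₗ[ℝ] V := -(A * A)
  have hT_inner (x y : V) : ⟪T x, y⟫ = ⟪A x, A y⟫ := by
    simp [T, Module.End.mul_apply, hA (A x)]
  have hT : T.IsSymmetric := fun x y => by
    rw [hT_inner, real_inner_comm, ← hT_inner, real_inner_comm]
  set b := hT.eigenvectorBasis rfl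
  set μ := hT.eigenvalues rfl
  have hTb : T = b.diagMap μ := b.toBasis.ext fun i => by
    rw [OrthonormalBasis.coe_toBasis, b.diagMap_apply_self, hT.apply_eigenvectorBasis]
    rfl
  have hμ (i : Fin _) : 0 < μ i := by
    have h : ⟪A (b i), A (b i)⟫ = μ i := by
      rw [← hT_inner, hTb, b.diagMap_apply_self, real_inner_smul_left, real_inner_self_eq_norm_sq,
        b.norm_eq_one, one_pow, mul_one]
    exact h ▸ real_inner_self_pos.2 (hA_inj.ne_iff' A.map_zero |>.2 (b.toBasis.ne_zero i))
  have hAT : Commute A (b.diagMap μ) :=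
    hTb ▸ ((Commute.refl A).mul_right (Commute.refl A)).neg_right
  set Q := b.diagMap ((fun c => (√c)⁻¹) ∘ μ)
  have hAQ : Commute A Q := b.commute_diagMap_comp hAT _
  have hQ : Q.IsSymmetric := b.isSymmetric_diagMap _
  refine ⟨A * Q, b.diagMap (Real.sqrt ∘ μ), ?_, ?_, ?_, ?_, ?_⟩
  · rw [mul_assoc, ← b.diagMap_mul, show ((fun c => (√c)⁻¹) ∘ μ) * (Real.sqrt ∘ μ) = 1 from
      funext fun i => inv_mul_cancel₀ (Real.sqrt_pos.2 (hμ i)).ne', b.diagMap_one, mul_one]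
  · have hAA : A * A = -b.diagMap μ := by rw [← hTb, neg_neg]
    calc A * Q * (A * Q) = A * A * (Q * Q) := by
          rw [mul_assoc, ← mul_assoc Q, ← hAQ.eq]
          simp only [mul_assoc]
      _ = -b.diagMap (μ * ((fun c => (√c)⁻¹) ∘ μ) * ((fun c => (√c)⁻¹) ∘ μ)) := by
        rw [hAA, b.diagMap_mul, b.diagMap_mul, neg_mul, mul_assoc]
      _ = -1 := by
        rw [← b.diagMap_one]
        congr 2
        funext i
        simp [mul_assoc, ← mul_inv, Real.mul_self_sqrt (hμ i).le, (hμ i).ne']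
  · intro x y
    rw [Module.End.mul_apply, hA, hQ, ← Module.End.mul_apply, ← hAQ.eq, Module.End.mul_apply]
  · exact (Commute.refl A).mul_left hAQ.symm
  · exact fun x hx => b.inner_diagMap_self_pos (fun i => Real.sqrt_pos.2 (hμ i)) hx

theorem exists_compatible_complex_structure_of_inner {ω : LinearMap.BilinForm ℝ V}
    (hω_alt : ω.IsAlt) (hω_nd : ω.SeparatingLeft) :
    ∃ J : V →ₗ[ℝ] V, J * J = -1 ∧ (∀ ξ η, ω ξ (J η) = ω η (J ξ)) ∧
      (∀ ξ, ξ ≠ 0 → 0 < ω ξ (J ξ)) ∧ (∀ ξ η, ω (J ξ) (J η) = ω ξ η) ∧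
      ∀ ξ η, ⟪J ξ, J η⟫ = ⟪ξ, η⟫ := by
  obtain ⟨A, hA⟩ := exists_inner_left_eq ω
  have hA_skew (x y : V) : ⟪A x, y⟫ = -⟪x, A y⟫ := by
    rw [hA, real_inner_comm, hA, hω_alt.neg_eq]
  have hA_inj : Function.Injective A := (injective_iff_map_eq_zero A).2 fun x hx =>
    hω_nd x fun y => by rw [← hA, hx, inner_zero_left]
  obtain ⟨J, P, hAJP, hJJ, hJ_skew, hJA, hP⟩ := exists_polar_of_skew hA_skew hA_inj
  have hJ_orth := inner_map_map_of_skew hJJ hJ_skew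
  refine ⟨J, hJJ, fun ξ η => ?_, fun ξ hξ => ?_, fun ξ η => ?_, hJ_orth⟩
  · rw [← hA, ← hA, real_inner_comm, hJ_skew, ← Module.End.mul_apply, hJA.eq,
      Module.End.mul_apply, hA_skew η]
  · rw [← hA, hAJP, Module.End.mul_apply, hJ_orth, real_inner_comm]
    exact hP ξ hξ
  · rw [← hA, ← hA, ← Module.End.mul_apply, ← hJA.eq, Module.End.mul_apply, hJ_orth]

end Polar

abbrev LinearMap.BilinForm.innerProductSpaceCore {V : Type*} [AddCommGroup V] [Module ℝ V]
    (G : LinearMap.BilinForm ℝ V) (hG_symm : ∀ ξ η, G ξ η = G η ξ)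
    (hG_pos : ∀ ξ, ξ ≠ 0 → 0 < G ξ ξ) : InnerProductSpace.Core ℝ V where
  inner x y := G x y
  conj_inner_symm x y := hG_symm y x
  re_inner_nonneg x := by
    rcases eq_or_ne x 0 with rfl | hx
    · simp
    · exact (hG_pos x hx).le
  add_left x y z := by simp
  smul_left x y r := by simp
  definite x hx := by_contra fun h => (hG_pos x h).ne' hx

/-- If `G` is a positive-definite symmetric bilinear form on a finite-dimensional
symplectic vector space `(V, ω)` with `G(ξ,ξ)G(η,η) ≥ ω(ξ,η)²`, then there is a complex
structure `J` compatible with `ω` (i.e. `ω(·,J·)` is symmetric positive-definite and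
`ω(Jξ,Jη) = ω(ξ,η)`) such that `G` is `J`-invariant and `ρ := G − ω(·,J·)` is symmetric
positive semidefinite. -/
theorem exists_compatible_complex_structure
    {V : Type*} [AddCommGroup V] [Module ℝ V] [FiniteDimensional ℝ V]
    (ω : LinearMap.BilinForm ℝ V)
    (hω_alt : ∀ ξ, ω ξ ξ = 0)
    (hω_nd : ∀ ξ, ξ ≠ 0 → ∃ η, ω ξ η ≠ 0)
    (G : LinearMap.BilinForm ℝ V)
    (hG_symm : ∀ ξ η, G ξ η = G η ξ)
    (hG_pos : ∀ ξ, ξ ≠ 0 → 0 < G ξ ξ)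
    (hGω : ∀ ξ η, (ω ξ η) ^ 2 ≤ G ξ ξ * G η η) :
    ∃ J : V →ₗ[ℝ] V,
      J ∘ₗ J = -LinearMap.id ∧
      (∀ ξ η, ω ξ (J η) = ω η (J ξ)) ∧
      (∀ ξ, ξ ≠ 0 → 0 < ω ξ (J ξ)) ∧
      (∀ ξ η, ω (J ξ) (J η) = ω ξ η) ∧
      (∀ ξ η, G (J ξ) (J η) = G ξ η) ∧
      (∀ ξ η, G ξ η - ω ξ (J η) = G η ξ - ω η (J ξ)) ∧
      (∀ ξ, 0 ≤ G ξ ξ - ω ξ (J ξ)) := by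
  let core := G.innerProductSpaceCore hG_symm hG_pos
  let _ : NormedAddCommGroup V := core.toNormedAddCommGroup
  let _ : InnerProductSpace ℝ V := InnerProductSpace.ofCore core.toCore
  have hω_sep : ω.SeparatingLeft := fun ξ h =>
    by_contra fun hξ => (hω_nd ξ hξ).elim fun η hη => hη (h η)
  obtain ⟨J, hJJ, hω_symm, hω_pos, hω_inv, hJ_orth⟩ :=
    exists_compatible_complex_structure_of_inner hω_alt hω_sep
  have hG_inv : ∀ ξ η, G (J ξ) (J η) = G ξ η := hJ_orth
  have hωG (ξ : V) : ω ξ (J ξ) ≤ G ξ ξ := by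
    have h : ω ξ (J ξ) ^ 2 ≤ G ξ ξ ^ 2 := by
      simpa only [sq, hG_inv ξ ξ] using hGω ξ (J ξ)
    exact (abs_le_of_sq_le_sq' h (real_inner_self_nonneg (x := ξ))).2
  exact ⟨J, hJJ, hω_symm, hω_pos, hω_inv, hG_inv, fun ξ η => by rw [hG_symm, hω_symm],
    fun ξ => sub_nonneg.2 (hωG ξ)⟩
end

section
/- Let F be an L(H)-valued POVM on a measure space, T(f) = ∫ f dF the induced quantization map, and for a state θ ∈ S(H) let μ_θ be the Husimi measure defined by ∫ f dμ_θ = tr(T(f)θ). Then for every bounded real measurable f: Var(f, μ_θ) = Var(T(f), θ) + tr(Δ(f)θ), where Var(f,μ_θ) = ∫f²dμ_θ − (∫f dμ_θ)², Var(T(f),θ) = tr(T(f)²θ) − (tr(T(f)θ))², and Δ(f) = T(f²) − T(f)². In particular, since Δ(f) ≥ 0, the classical variance Var(f,μ_θ) is at least the quantum variance Var(T(f),θ). -/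
/-!
Once `∫ f dμ_θ` and `∫ f² dμ_θ` are expressed as traces, the identity is linearity of the trace
in `Δ(f) = T(f²) - T(f)²`. For the inequality, the Naimark form `T(g) = Π S_g Π*` with `ΠΠ* = 1`
gives `Δ(f) = (Π S)(1 - Π*Π)(Π S)*`, where `1 - Π*Π` is an orthogonal projection, so `Δ(f) ≥ 0`;
and `tr (Δ θ) ≥ 0` for positive `Δ` and `θ`.
-/

open ContinuousLinearMap
open scoped ComplexOrder

section
variable {H : Type*} [NormedAddCommGroup H] [InnerProductSpace ℂ H] [FiniteDimensional ℂ H]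

/-- With `B = √B √B`, cyclicity gives `tr (A B) = tr (√B A √B)`, the trace of a positive map. -/
theorem trace_mul_nonneg_of_isPositive {A B : H →L[ℂ] H} (hA : A.IsPositive)
    (hB : B.IsPositive) : 0 ≤ LinearMap.trace ℂ H ↑(A * B) := by
  set s := CFC.sqrt B
  have hs : s * s = B := CFC.sqrt_mul_sqrt_self B ((nonneg_iff_isPositive B).mpr hB)
  have hs_adj : adjoint s = s :=
    isSelfAdjoint_iff'.mp (IsSelfAdjoint.of_nonneg (CFC.sqrt_nonneg B))
  have hcyc : LinearMap.trace ℂ H ↑(A * B) = LinearMap.trace ℂ H ↑(s ∘L A ∘L adjoint s) := by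
    rw [← hs, hs_adj, ← mul_assoc, toLinearMap_mul, LinearMap.trace_mul_comm, ← toLinearMap_mul]
    rfl
  rw [hcyc]
  exact ((hA.conj_adjoint s).toLinearMap).trace_nonneg

end

section
variable {E F : Type*} [NormedAddCommGroup E] [InnerProductSpace ℂ E] [CompleteSpace E]
  [NormedAddCommGroup F] [InnerProductSpace ℂ F] [CompleteSpace F]

theorem isStarProjection_adjoint_comp_self {V : E →L[ℂ] F} (hV : V ∘L adjoint V = 1) :
    IsStarProjection (adjoint V ∘L V) where
  isIdempotentElem := by
    rw [IsIdempotentElem, mul_def, comp_assoc, ← comp_assoc V, hV, one_def, id_comp]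
  isSelfAdjoint := by
    rw [isSelfAdjoint_iff', adjoint_comp, adjoint_adjoint]

theorem isPositive_compression_sq_sub_sq {V : E →L[ℂ] F} (hV : V ∘L adjoint V = 1)
    {S : E →L[ℂ] E} (hS : IsSelfAdjoint S) :
    (V ∘L (S ^ 2) ∘L adjoint V - (V ∘L S ∘L adjoint V) ^ 2).IsPositive := by
  have hQ : (1 - adjoint V ∘L V).IsPositive :=
    (nonneg_iff_isPositive _).mp (isStarProjection_adjoint_comp_self hV).one_sub.nonneg
  have hdefect : V ∘L (S ^ 2) ∘L adjoint V - (V ∘L S ∘L adjoint V) ^ 2 =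
      (V ∘L S) ∘L (1 - adjoint V ∘L V) ∘L adjoint (V ∘L S) := by
    rw [adjoint_comp, isSelfAdjoint_iff'.mp hS]
    simp only [pow_two, mul_def, comp_sub, sub_comp, one_def, id_comp, comp_assoc]
  rw [hdefect]
  exact hQ.conj_adjoint (V ∘L S)

end

theorem husimi_variance_identity_general
    {H' : Type*} [NormedAddCommGroup H'] [InnerProductSpace ℂ H'] [CompleteSpace H']
    {H : Type*} [NormedAddCommGroup H] [InnerProductSpace ℂ H] [FiniteDimensional ℂ H]
    (Pr : H' →L[ℂ] H) (hPr : Pr ∘L adjoint Pr = 1)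
    (S : H' →L[ℂ] H') (hS : IsSelfAdjoint S)
    (Tf Tf2 : H →L[ℂ] H)
    (hTf : Tf = Pr ∘L S ∘L adjoint Pr)
    (hTf2 : Tf2 = Pr ∘L (S ^ 2) ∘L adjoint Pr)
    (θ : H →L[ℂ] H) (hθ : θ.IsPositive)
    {M : Type*} [MeasurableSpace M] (μθ : MeasureTheory.Measure M)
    (f : M → ℝ)
    (h1 : ∫ x, f x ∂μθ = (LinearMap.trace ℂ H ((Tf * θ : H →L[ℂ] H) : H →ₗ[ℂ] H)).re)
    (h2 : ∫ x, (f x) ^ 2 ∂μθ =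
      (LinearMap.trace ℂ H ((Tf2 * θ : H →L[ℂ] H) : H →ₗ[ℂ] H)).re) :
    ((∫ x, (f x) ^ 2 ∂μθ) - (∫ x, f x ∂μθ) ^ 2 =
        ((LinearMap.trace ℂ H ((Tf ^ 2 * θ : H →L[ℂ] H) : H →ₗ[ℂ] H)).re -
          ((LinearMap.trace ℂ H ((Tf * θ : H →L[ℂ] H) : H →ₗ[ℂ] H)).re) ^ 2) +
        (LinearMap.trace ℂ H (((Tf2 - Tf ^ 2) * θ : H →L[ℂ] H) : H →ₗ[ℂ] H)).re) ∧
    ((LinearMap.trace ℂ H ((Tf ^ 2 * θ : H →L[ℂ] H) : H →ₗ[ℂ] H)).re -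
        ((LinearMap.trace ℂ H ((Tf * θ : H →L[ℂ] H) : H →ₗ[ℂ] H)).re) ^ 2 ≤
      (∫ x, (f x) ^ 2 ∂μθ) - (∫ x, f x ∂μθ) ^ 2) := by
  have hΔ : (Tf2 - Tf ^ 2).IsPositive := by
    rw [hTf, hTf2]
    exact isPositive_compression_sq_sub_sq hPr hS
  have htr_Δ : (LinearMap.trace ℂ H (((Tf2 - Tf ^ 2) * θ : H →L[ℂ] H) : H →ₗ[ℂ] H)).re =
      (LinearMap.trace ℂ H ((Tf2 * θ : H →L[ℂ] H) : H →ₗ[ℂ] H)).re -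
        (LinearMap.trace ℂ H ((Tf ^ 2 * θ : H →L[ℂ] H) : H →ₗ[ℂ] H)).re := by
    rw [sub_mul, toLinearMap_sub, map_sub, Complex.sub_re]
  have htr_Δ_nonneg :
      0 ≤ (LinearMap.trace ℂ H (((Tf2 - Tf ^ 2) * θ : H →L[ℂ] H) : H →ₗ[ℂ] H)).re :=
    (Complex.nonneg_iff.mp (trace_mul_nonneg_of_isPositive hΔ hθ)).1
  rw [h1, h2]
  exact ⟨by rw [htr_Δ]; ring, by linarith⟩

/-- Let `T` be the quantization induced by a POVM (presented via its Naimark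
dilation: `T(f) = Π S Π*`, `T(f²) = Π S² Π*` with `Π Π* = 1` and `S` self-adjoint), let `θ`
be a state and `μ_θ` the Husimi measure, defined by `∫ h dμ_θ = tr(T(h)θ)`. Then
`Var(f, μ_θ) = Var(T(f), θ) + tr(Δ(f)θ)` with `Δ(f) = T(f²) − T(f)²`; in particular, since
`Δ(f) ≥ 0`, the classical variance dominates the quantum variance. -/
theorem husimi_variance_identity
    {H' : Type*} [NormedAddCommGroup H'] [InnerProductSpace ℂ H'] [CompleteSpace H']
    {H : Type*} [NormedAddCommGroup H] [InnerProductSpace ℂ H] [FiniteDimensional ℂ H]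
    (Pr : H' →L[ℂ] H) (hPr : Pr ∘L adjoint Pr = 1)
    (S : H' →L[ℂ] H') (hS : IsSelfAdjoint S)
    (Tf Tf2 : H →L[ℂ] H)
    (hTf : Tf = Pr ∘L S ∘L adjoint Pr)
    (hTf2 : Tf2 = Pr ∘L (S ^ 2) ∘L adjoint Pr)
    (θ : H →L[ℂ] H) (hθ : θ.IsPositive)
    (hθ1 : LinearMap.trace ℂ H (θ : H →ₗ[ℂ] H) = 1)
    {M : Type*} [MeasurableSpace M] (μθ : MeasureTheory.Measure M)
    [MeasureTheory.IsProbabilityMeasure μθ]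
    (f : M → ℝ) (hf_meas : Measurable f) (hf_bdd : ∃ C, ∀ x, |f x| ≤ C)
    (h1 : ∫ x, f x ∂μθ = (LinearMap.trace ℂ H ((Tf * θ : H →L[ℂ] H) : H →ₗ[ℂ] H)).re)
    (h2 : ∫ x, (f x) ^ 2 ∂μθ =
      (LinearMap.trace ℂ H ((Tf2 * θ : H →L[ℂ] H) : H →ₗ[ℂ] H)).re) :
    ((∫ x, (f x) ^ 2 ∂μθ) - (∫ x, f x ∂μθ) ^ 2 =
        ((LinearMap.trace ℂ H ((Tf ^ 2 * θ : H →L[ℂ] H) : H →ₗ[ℂ] H)).re -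
          ((LinearMap.trace ℂ H ((Tf * θ : H →L[ℂ] H) : H →ₗ[ℂ] H)).re) ^ 2) +
        (LinearMap.trace ℂ H (((Tf2 - Tf ^ 2) * θ : H →L[ℂ] H) : H →ₗ[ℂ] H)).re) ∧
    ((LinearMap.trace ℂ H ((Tf ^ 2 * θ : H →L[ℂ] H) : H →ₗ[ℂ] H)).re -
        ((LinearMap.trace ℂ H ((Tf * θ : H →L[ℂ] H) : H →ₗ[ℂ] H)).re) ^ 2 ≤
      (∫ x, (f x) ^ 2 ∂μθ) - (∫ x, f x ∂μθ) ^ 2) :=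
  husimi_variance_identity_general Pr hPr S hS Tf Tf2 hTf hTf2 θ hθ μθ f h1 h2
end

section
/- Let C be a quantization-type map satisfying the positivity constraint: c₊(f,f)(x) ≤ 0 for all smooth real f and all x. Suppose in local coordinates around x₀ the symmetric bilinear map c₊ has the coboundary form c₊(f,g) = a(fg) − f·a(g) − g·a(f) where a = Σ_{1≤|α|≤k} a_α ∂^α is a differential operator with a constant-coefficient principal part of order k > 2 at x₀ (some a_β ≠ 0 with |β| = k). Then there exists a smooth function f such that c₊(f,f)(x₀) > 0, a contradiction; hence a has order at most 2 and c₊ is a bi-differential operator of order (1,1). -/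
/-- The list of basis vectors of `ℝ^m` associated to a multi-index `α`, with `αᵢ` copies of
the `i`-th basis vector. -/
noncomputable def mvec (m : ℕ) (α : Fin m → ℕ) : List (Fin m → ℝ) :=
  (List.finRange m).flatMap fun i => List.replicate (α i) (Pi.single i 1)

/-- The partial derivative `∂^α f (x)` of a (smooth) function `f : ℝ^m → ℝ`. -/
noncomputable def mderiv {m : ℕ} (α : Fin m → ℕ) (f : (Fin m → ℝ) → ℝ)
    (x : Fin m → ℝ) : ℝ :=
  iteratedFDeriv ℝ (mvec m α).length f x (fun j => (mvec m α).get j)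

open scoped Nat

section Aux

variable {m : ℕ}

noncomputable def Pmon (m : ℕ) (x₀ : Fin m → ℝ) (γ : Fin m → ℕ) : (Fin m → ℝ) → ℝ :=
  fun x => ∏ i, (x i - x₀ i) ^ γ i

lemma contDiff_Pmon (x₀ : Fin m → ℝ) (γ : Fin m → ℕ) : ContDiff ℝ (⊤ : ℕ∞) (Pmon m x₀ γ) := by
  apply contDiff_prod
  intro i _
  exact ((contDiff_apply ℝ ℝ i).sub contDiff_const).pow _

lemma fderiv_Pmon (x₀ : Fin m → ℝ) (γ : Fin m → ℕ) (j : Fin m) (y : Fin m → ℝ) :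
    fderiv ℝ (Pmon m x₀ γ) y (Pi.single j 1)
      = (γ j : ℝ) * Pmon m x₀ (γ - Pi.single j 1) y := by
  have hd : ∀ i : Fin m, HasFDerivAt (fun x : Fin m → ℝ => (x i - x₀ i) ^ γ i)
      (((γ i : ℝ) * (y i - x₀ i) ^ (γ i - 1)) •
        (ContinuousLinearMap.proj i : (Fin m → ℝ) →L[ℝ] ℝ)) y := by
    intro i
    have h1 : HasFDerivAt (fun x : Fin m → ℝ => x i - x₀ i)
        (ContinuousLinearMap.proj i : (Fin m → ℝ) →L[ℝ] ℝ) y := by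
      simpa using (hasFDerivAt_apply i y).sub_const (x₀ i)
    have := (hasDerivAt_pow (γ i) (y i - x₀ i)).comp_hasFDerivAt y h1
    simpa [Function.comp_def] using this
  have hfd := (HasFDerivAt.finset_prod (u := Finset.univ)
    (g := fun i (x : Fin m → ℝ) => (x i - x₀ i) ^ γ i)
    (fun i _ => hd i)).fderiv
  rw [show Pmon m x₀ γ = fun x => ∏ i, (x i - x₀ i) ^ γ i from rfl, hfd]
  simp only [ContinuousLinearMap.sum_apply, ContinuousLinearMap.smul_apply,
    ContinuousLinearMap.proj_apply, smul_eq_mul]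
  rw [Finset.sum_eq_single j]
  · simp only [Pi.single_eq_same]
    rw [Pmon]
    rw [show (Finset.univ : Finset (Fin m)) = insert j (Finset.univ.erase j) by
      simp [Finset.insert_erase]]
    rw [Finset.prod_insert (Finset.notMem_erase _ _)]
    have : ∀ i ∈ Finset.univ.erase j, (y i - x₀ i) ^ ((γ - Pi.single j 1 : Fin m → ℕ) i)
        = (y i - x₀ i) ^ γ i := by
      intro i hi
      have : i ≠ j := (Finset.mem_erase.mp hi).1
      simp [Pi.single_eq_of_ne this]
    rw [Finset.prod_congr rfl this]
    simp [Pi.single_eq_same]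
    ring
  · intro b _ hbj
    simp [Pi.single_eq_of_ne hbj]
  · simp

lemma peel {n : ℕ} (f : (Fin m → ℝ) → ℝ) (hf : ContDiff ℝ (⊤ : ℕ∞) f) (x : Fin m → ℝ)
    (v : Fin (n + 1) → (Fin m → ℝ)) :
    iteratedFDeriv ℝ (n + 1) f x v
      = iteratedFDeriv ℝ n (fun y => fderiv ℝ f y (v (Fin.last n))) x (Fin.init v) := by
  rw [iteratedFDeriv_succ_apply_right]
  rw [iteratedFDeriv_clm_apply_const_apply (hf.fderiv_right (m := (⊤ : ℕ∞)) (by exact_mod_cast le_top)) (by exact_mod_cast le_top)]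

lemma iFD_cast {n n' : ℕ} (h : n' = n) (f : (Fin m → ℝ) → ℝ) (x : Fin m → ℝ)
    (v : Fin n → (Fin m → ℝ)) :
    iteratedFDeriv ℝ n' f x (fun j => v (Fin.cast h j)) = iteratedFDeriv ℝ n f x v := by
  subst h; rfl

lemma key_list (x₀ : Fin m → ℝ) (L : List (Fin m)) : ∀ γ : Fin m → ℕ,
    iteratedFDeriv ℝ L.length (Pmon m x₀ γ) x₀ (fun t => Pi.single (L.get t) 1)
      = if (fun i => (L.count i : ℕ)) = γ then ∏ i, ((γ i)! : ℝ) else 0 := by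
  induction L using List.reverseRecOn with
  | nil =>
    intro γ
    have h0 : ((iteratedFDeriv ℝ ([] : List (Fin m)).length (Pmon m x₀ γ) x₀)
        fun t => Pi.single ((List.nil).get t) 1) = Pmon m x₀ γ x₀ :=
      iteratedFDeriv_zero_apply _
    rw [h0]
    by_cases h : (fun i => (([] : List (Fin m)).count i : ℕ)) = γ
    · have hγ : γ = fun _ => 0 := by rw [← h]; funext i; simp
      subst hγ
      simp [Pmon]
    · rw [if_neg h]
      have : ∃ i, γ i ≠ 0 := by
        by_contra hc
        push_neg at hc
        exact h (by funext i; simp [hc i])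
      obtain ⟨i, hi⟩ := this
      rw [Pmon]
      apply Finset.prod_eq_zero (Finset.mem_univ i)
      simp [zero_pow hi]
  | append_singleton L j IH =>
    intro γ
    have hlen : (L ++ [j]).length = L.length + 1 := by simp
    set w : Fin (L.length + 1) → (Fin m → ℝ) :=
      fun t => Pi.single ((L ++ [j]).get (Fin.cast hlen.symm t)) 1 with hw
    have hcast : (fun t => Pi.single ((L ++ [j]).get t) 1)
        = fun t => w (Fin.cast hlen t) := by
      funext t; simp [hw]
    rw [hcast, iFD_cast hlen (Pmon m x₀ γ) x₀ w, peel _ (contDiff_Pmon x₀ γ)]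
    have hlast : w (Fin.last L.length) = Pi.single j 1 := by
      simp [hw]
    have hinit : Fin.init w = fun t => Pi.single (L.get t) 1 := by
      funext t
      simp [hw, Fin.init, List.getElem_append_left]
    rw [hlast, hinit]
    have hfun : (fun y => fderiv ℝ (Pmon m x₀ γ) y (Pi.single j 1))
        = (γ j : ℝ) • Pmon m x₀ (γ - Pi.single j 1) := by
      funext y; simp [fderiv_Pmon]
    rw [hfun, iteratedFDeriv_const_smul_apply ((contDiff_Pmon x₀ _).contDiffAt.of_le (by exact_mod_cast le_top))]
    simp only [ContinuousMultilinearMap.smul_apply, smul_eq_mul]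
    rw [IH]
    by_cases hγj : γ j = 0
    · have hne : ¬ (fun i => ((L ++ [j]).count i : ℕ)) = γ := by
        intro h
        have := congrFun h j
        simp [List.count_append, hγj] at this
      rw [if_neg hne, hγj]
      simp
    · by_cases hc : (fun i => (L.count i : ℕ)) = γ - Pi.single j 1
      · have hpos : 0 < γ j := Nat.pos_of_ne_zero hγj
        have heq : (fun i => ((L ++ [j]).count i : ℕ)) = γ := by
          funext i
          have hci := congrFun hc i
          by_cases hij : i = j
          · subst hij
            have h3 : List.count i (L ++ [i]) = List.count i L + 1 := by
              simp [List.count_append]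
            simp only [Pi.sub_apply, Pi.single_eq_same] at hci
            omega
          · have h3 : List.count i (L ++ [j]) = List.count i L := by
              simp [List.count_append, List.count_singleton, Ne.symm hij]
            simp only [Pi.sub_apply, Pi.single_eq_of_ne hij] at hci
            omega
        have h1 : (γ j : ℝ) * ((((γ - Pi.single j 1 : Fin m → ℕ) j))! : ℝ) = ((γ j)! : ℝ) := by
          simp only [Pi.sub_apply, Pi.single_eq_same]
          rw [← Nat.cast_mul, Nat.mul_factorial_pred hpos.ne']
        have h2 : ∀ i ∈ Finset.univ.erase j,
            (((γ - Pi.single j 1 : Fin m → ℕ) i)! : ℝ) = ((γ i)! : ℝ) := by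
          intro i hi
          simp [Pi.single_eq_of_ne (Finset.mem_erase.mp hi).1]
        have hsplit : ∀ δ : Fin m → ℕ, ∏ i, ((δ i)! : ℝ)
            = ((δ j)! : ℝ) * ∏ i ∈ Finset.univ.erase j, ((δ i)! : ℝ) := fun δ =>
          (Finset.mul_prod_erase _ _ (Finset.mem_univ j)).symm
        rw [if_pos hc, if_pos heq, hsplit (γ - Pi.single j 1), hsplit γ,
          Finset.prod_congr rfl h2, ← mul_assoc, h1]
      · have hne : ¬ (fun i => ((L ++ [j]).count i : ℕ)) = γ := by
          intro h
          apply hc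
          funext i
          have hci := congrFun h i
          by_cases hij : i = j
          · subst hij
            simp only [List.count_append, List.count_singleton] at hci
            simp only [Pi.sub_apply, Pi.single_eq_same]
            simp at hci
            omega
          · simp only [List.count_append, List.count_singleton] at hci
            simp only [Pi.sub_apply, Pi.single_eq_of_ne hij]
            simp [Ne.symm hij] at hci
            omega
        rw [if_neg hc, if_neg hne, mul_zero]

noncomputable def idxList (m : ℕ) (α : Fin m → ℕ) : List (Fin m) :=
  (List.finRange m).flatMap fun i => List.replicate (α i) i

lemma mvec_eq (α : Fin m → ℕ) :
    mvec m α = (idxList m α).map (fun i => (Pi.single i 1 : Fin m → ℝ)) := by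
  rw [mvec, idxList, List.map_flatMap]
  simp [List.map_replicate]

lemma count_idxList (α : Fin m → ℕ) (i : Fin m) : (idxList m α).count i = α i := by
  rw [idxList, List.count_flatMap]
  rw [show (List.count i ∘ fun j : Fin m => List.replicate (α j) j)
      = fun a => if a = i then α a else 0 by
    funext a; simp only [Function.comp_apply]; rw [List.count_replicate]; simp]
  rw [← Fin.sum_univ_def]
  simp

lemma mderiv_Pmon (x₀ : Fin m → ℝ) (α γ : Fin m → ℕ) :
    mderiv α (Pmon m x₀ γ) x₀ = if α = γ then ∏ i, ((γ i)! : ℝ) else 0 := by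
  rw [mderiv, mvec_eq α]
  have h : ((idxList m α).map (fun i => (Pi.single i 1 : Fin m → ℝ))).length
      = (idxList m α).length := List.length_map _
  have hv : (fun j => ((idxList m α).map (fun i => (Pi.single i 1 : Fin m → ℝ))).get j)
      = fun j => (fun t : Fin (idxList m α).length =>
          (Pi.single ((idxList m α).get t) 1 : Fin m → ℝ)) (Fin.cast h j) := by
    funext j
    simp [List.getElem_map]
  rw [hv, iFD_cast h (Pmon m x₀ γ) x₀
    (fun t => (Pi.single ((idxList m α).get t) 1 : Fin m → ℝ)),
    key_list x₀ (idxList m α) γ]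
  have : (fun i => ((idxList m α).count i : ℕ)) = α := by
    funext i; exact count_idxList α i
  rw [this]

lemma mderiv_add (α : Fin m → ℕ) (f g : (Fin m → ℝ) → ℝ) (hf : ContDiff ℝ (⊤ : ℕ∞) f)
    (hg : ContDiff ℝ (⊤ : ℕ∞) g) (x : Fin m → ℝ) :
    mderiv α (f + g) x = mderiv α f x + mderiv α g x := by
  rw [mderiv, mderiv, mderiv,
    iteratedFDeriv_add_apply (hf.contDiffAt.of_le (by exact_mod_cast le_top)) (hg.contDiffAt.of_le (by exact_mod_cast le_top))]
  rfl

lemma mderiv_smul (α : Fin m → ℕ) (c : ℝ) (f : (Fin m → ℝ) → ℝ) (hf : ContDiff ℝ (⊤ : ℕ∞) f)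
    (x : Fin m → ℝ) :
    mderiv α (c • f) x = c * mderiv α f x := by
  rw [mderiv, mderiv, iteratedFDeriv_const_smul_apply (hf.contDiffAt.of_le (by exact_mod_cast le_top))]
  rfl

lemma Pmon_mul (x₀ : Fin m → ℝ) (γ δ : Fin m → ℕ) (x : Fin m → ℝ) :
    Pmon m x₀ γ x * Pmon m x₀ δ x = Pmon m x₀ (γ + δ) x := by
  rw [Pmon, Pmon, Pmon, ← Finset.prod_mul_distrib]
  exact Finset.prod_congr rfl fun i _ => by rw [← pow_add]; rfl

lemma Pmon_self (x₀ : Fin m → ℝ) (γ : Fin m → ℕ) (hγ : γ ≠ 0) : Pmon m x₀ γ x₀ = 0 := by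
  have : ∃ i, γ i ≠ 0 := by
    by_contra hc
    push_neg at hc
    exact hγ (funext hc)
  obtain ⟨i, hi⟩ := this
  rw [Pmon]
  apply Finset.prod_eq_zero (Finset.mem_univ i)
  simp [zero_pow hi]

lemma sum_pick (S : Finset (Fin m → ℕ)) (a : (Fin m → ℕ) → ℝ) (t : ℝ) (γ : Fin m → ℕ)
    (F : ℝ) :
    ∑ α ∈ S, a α * (t * (if α = γ then F else 0))
      = t * F * (if γ ∈ S then a γ else 0) := by
  have h : ∀ α ∈ S, a α * (t * (if α = γ then F else 0))
      = if α = γ then t * F * a α else 0 := by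
    intro α _
    by_cases hh : α = γ <;> simp [hh] <;> ring
  rw [Finset.sum_congr rfl h, Finset.sum_ite_eq' S γ (fun α => t * F * a α)]
  by_cases hh : γ ∈ S <;> simp [hh]

lemma sum_sub_single (β : Fin m → ℕ) (j : Fin m) (hj : β j ≠ 0) :
    ∑ i, (β - Pi.single j 1 : Fin m → ℕ) i = (∑ i, β i) - 1 := by
  have hpt : ∀ i, β i = (β - Pi.single j 1 : Fin m → ℕ) i + (Pi.single j 1 : Fin m → ℕ) i := by
    intro i
    rcases eq_or_ne i j with rfl | h
    · simp only [Pi.sub_apply, Pi.single_eq_same]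
      omega
    · simp [Pi.single_eq_of_ne h]
  have hsum : ∑ i, β i
      = ∑ i, ((β - Pi.single j 1 : Fin m → ℕ) i + (Pi.single j 1 : Fin m → ℕ) i) :=
    Finset.sum_congr rfl fun i _ => hpt i
  rw [Finset.sum_add_distrib] at hsum
  have hse : ∑ i, (Pi.single j 1 : Fin m → ℕ) i = 1 := by
    rw [Finset.sum_pi_single']
    simp
  omega

lemma step {m : ℕ} (S : Finset (Fin m → ℕ)) (a : (Fin m → ℕ) → ℝ) (x₀ : Fin m → ℝ)
    (hneg : ∀ f : (Fin m → ℝ) → ℝ, ContDiff ℝ (⊤ : ℕ∞) f →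
      (∑ α ∈ S, a α * mderiv α (f * f) x₀)
        - f x₀ * (∑ α ∈ S, a α * mderiv α f x₀)
        - f x₀ * (∑ α ∈ S, a α * mderiv α f x₀) ≤ 0)
    (β : Fin m → ℕ) (hβS : β ∈ S) (hβ2 : 2 < ∑ i, β i) (j : Fin m) (hj : β j ≠ 0)
    (h2 : ((β - Pi.single j 1) + (β - Pi.single j 1) : Fin m → ℕ) ∈ S →
      a ((β - Pi.single j 1) + (β - Pi.single j 1)) = 0) :
    a β = 0 := by
  set βh : Fin m → ℕ := β - Pi.single j 1 with hβhdef
  set ej : Fin m → ℕ := Pi.single j 1 with hejdef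
  have hβhj : βh + ej = β := by
    funext i
    simp only [Pi.add_apply, hβhdef, hejdef, Pi.sub_apply]
    rcases eq_or_ne i j with rfl | hij
    · simp only [Pi.single_eq_same]
      omega
    · simp [Pi.single_eq_of_ne hij]
  have hβhsum : ∑ i, βh i = (∑ i, β i) - 1 := sum_sub_single β j hj
  have hβh0 : βh ≠ 0 := by
    intro h
    rw [h] at hβhsum
    simp at hβhsum
    omega
  have hej0 : ej ≠ 0 := by
    intro h
    have := congrFun h j
    simp [hejdef] at this
  set F1 : ℝ := ∏ i, (((βh + βh : Fin m → ℕ) i)! : ℝ) with hF1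
  set F2 : ℝ := ∏ i, ((β i)! : ℝ) with hF2
  set F3 : ℝ := ∏ i, (((ej + ej : Fin m → ℕ) i)! : ℝ) with hF3
  set A1 : ℝ := if (βh + βh : Fin m → ℕ) ∈ S then a (βh + βh) else 0 with hA1
  set A3 : ℝ := if (ej + ej : Fin m → ℕ) ∈ S then a (ej + ej) else 0 with hA3
  have hA1z : A1 = 0 := by
    rw [hA1]
    split
    · exact h2 ‹_›
    · rfl
  have hC : ∀ c : ℝ, (c + c) * F2 * a β + 1 * F3 * A3 ≤ 0 := by
    intro c
    set f : (Fin m → ℝ) → ℝ := c • Pmon m x₀ βh + Pmon m x₀ ej with hfdef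
    have hsm1 : ContDiff ℝ (⊤ : ℕ∞) (c • Pmon m x₀ βh) := by
      exact (contDiff_Pmon x₀ βh).const_smul c
    have hsm : ContDiff ℝ (⊤ : ℕ∞) f := hsm1.add (contDiff_Pmon x₀ ej)
    have hf0 : f x₀ = 0 := by
      simp [hfdef, Pmon_self x₀ βh hβh0, Pmon_self x₀ ej hej0]
    have hff : f * f = (c * c) • Pmon m x₀ (βh + βh)
        + ((c + c) • Pmon m x₀ β + Pmon m x₀ (ej + ej)) := by
      funext x
      simp only [hfdef, Pi.mul_apply, Pi.add_apply, Pi.smul_apply, smul_eq_mul]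
      rw [← hβhj, ← Pmon_mul, ← Pmon_mul, ← Pmon_mul]
      ring
    have hB1 : ContDiff ℝ (⊤ : ℕ∞) ((c + c) • Pmon m x₀ β) := by
      exact (contDiff_Pmon x₀ β).const_smul (c + c)
    have hB2 : ContDiff ℝ (⊤ : ℕ∞) (Pmon m x₀ (ej + ej)) := contDiff_Pmon x₀ _
    have hB : ContDiff ℝ (⊤ : ℕ∞) ((c + c) • Pmon m x₀ β + Pmon m x₀ (ej + ej)) := hB1.add hB2
    have hA : ContDiff ℝ (⊤ : ℕ∞) ((c * c) • Pmon m x₀ (βh + βh)) := by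
      exact (contDiff_Pmon x₀ (βh + βh)).const_smul (c * c)
    have hmd : ∀ α ∈ S, a α * mderiv α (f * f) x₀
        = a α * ((c * c) * (if α = βh + βh then F1 else 0))
          + (a α * ((c + c) * (if α = β then F2 else 0))
            + a α * (1 * (if α = ej + ej then F3 else 0))) := by
      intro α _
      rw [hff, mderiv_add _ _ _ hA hB, mderiv_add _ _ _ hB1 hB2,
        mderiv_smul _ _ _ (contDiff_Pmon x₀ _), mderiv_smul _ _ _ (contDiff_Pmon x₀ _),
        mderiv_Pmon, mderiv_Pmon, mderiv_Pmon]
      ring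
    have key := hneg f hsm
    rw [hf0] at key
    simp only [zero_mul, sub_zero] at key
    rw [Finset.sum_congr rfl hmd, Finset.sum_add_distrib, Finset.sum_add_distrib,
      sum_pick S a (c * c) (βh + βh) F1, sum_pick S a (c + c) β F2,
      sum_pick S a 1 (ej + ej) F3, ← hA1, ← hA3, hA1z, mul_zero] at key
    rw [if_pos hβS] at key
    linarith
  have hF2pos : 0 < F2 := by
    rw [hF2]
    apply Finset.prod_pos
    intro i _
    exact_mod_cast Nat.cast_pos.mpr (Nat.factorial_pos (β i))
  by_contra haβ
  set D : ℝ := 2 * F2 * a β with hD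
  have hDne : D ≠ 0 := by
    rw [hD]
    intro h
    rcases mul_eq_zero.mp h with h' | h'
    · rcases mul_eq_zero.mp h' with h'' | h''
      · norm_num at h''
      · exact absurd h'' (ne_of_gt hF2pos)
    · exact haβ h'
  have hc := hC ((1 - 1 * F3 * A3) / D)
  have : ((1 - 1 * F3 * A3) / D + (1 - 1 * F3 * A3) / D) * F2 * a β
      = 1 - 1 * F3 * A3 := by
    field_simp [hD]
    ring
  rw [this] at hc
  linarith

end Aux

/-- suppose the bilinear map `c₊(f,g)(x₀) = a(fg)(x₀) − f(x₀)a(g)(x₀) −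
g(x₀)a(f)(x₀)`, with `a = ∑_{1≤|α|≤k} a_α ∂^α` a constant-coefficient differential operator at
`x₀`, satisfies the positivity constraint `c₊(f,f)(x₀) ≤ 0` for all smooth `f`. Then all
coefficients `a_β` with `|β| > 2` vanish, i.e. `a` has order at most `2` and `c₊` is a
bi-differential operator of order `(1,1)`. -/
theorem order_le_two_of_nonpositive {m k : ℕ} (hk : 2 < k)
    (S : Finset (Fin m → ℕ)) (a : (Fin m → ℕ) → ℝ)
    (hS : ∀ α ∈ S, 1 ≤ ∑ i, α i ∧ ∑ i, α i ≤ k)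
    (x₀ : Fin m → ℝ)
    (hneg : ∀ f : (Fin m → ℝ) → ℝ, ContDiff ℝ (⊤ : ℕ∞) f →
      (∑ α ∈ S, a α * mderiv α (f * f) x₀)
        - f x₀ * (∑ α ∈ S, a α * mderiv α f x₀)
        - f x₀ * (∑ α ∈ S, a α * mderiv α f x₀) ≤ 0) :
    ∀ β ∈ S, 2 < ∑ i, β i → a β = 0 := by
  have key : ∀ t : ℕ, ∀ β ∈ S, 2 < ∑ i, β i → k ≤ t + ∑ i, β i → a β = 0 := by
    intro t
    induction t with
    | zero =>
      intro β hβS hβ2 hkle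
      obtain ⟨j, hj⟩ : ∃ j, β j ≠ 0 := by
        by_contra h
        push_neg at h
        have : ∑ i, β i = 0 := Finset.sum_eq_zero fun i _ => h i
        omega
      refine step S a x₀ hneg β hβS hβ2 j hj ?_
      intro hmem
      exfalso
      have hle := (hS _ hmem).2
      have hsub := sum_sub_single β j hj
      have hdd : ∑ i, ((β - Pi.single j 1) + (β - Pi.single j 1) : Fin m → ℕ) i
          = (∑ i, (β - Pi.single j 1 : Fin m → ℕ) i)
            + ∑ i, (β - Pi.single j 1 : Fin m → ℕ) i := by
        rw [← Finset.sum_add_distrib]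
        rfl
      have hβk := (hS β hβS).2
      omega
    | succ t ih =>
      intro β hβS hβ2 hkle
      obtain ⟨j, hj⟩ : ∃ j, β j ≠ 0 := by
        by_contra h
        push_neg at h
        have : ∑ i, β i = 0 := Finset.sum_eq_zero fun i _ => h i
        omega
      refine step S a x₀ hneg β hβS hβ2 j hj ?_
      intro hmem
      have hsub := sum_sub_single β j hj
      have hdd : ∑ i, ((β - Pi.single j 1) + (β - Pi.single j 1) : Fin m → ℕ) i
          = (∑ i, (β - Pi.single j 1 : Fin m → ℕ) i)
            + ∑ i, (β - Pi.single j 1 : Fin m → ℕ) i := by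
        rw [← Finset.sum_add_distrib]
        rfl
      exact ih _ hmem (by omega) (by omega)
  intro β hβS hβ2
  exact key k β hβS hβ2 (by omega)
end

section
/- Let G be a positive-definite symmetric bilinear form on a symplectic vector space (V,ω) of dimension 2d such that G(ξ,ξ)G(η,η) ≥ ω(ξ,η)² for all ξ,η ∈ V. Then the volume of the unit ball of G (equivalently, the Gram determinant of G with respect to any symplectic basis) satisfies det(G) ≥ 1 in any basis where ω is the standard symplectic form; i.e., Vol(G) ≥ Vol(ω). -/
/-!
Testing the hypothesis at `ξ = G⁻¹ J η`, where Cauchy–Schwarz for `G` is sharp, gives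
`Jᵀ G⁻¹ J ≤ G` as quadratic forms, hence `det J ^ 2 / det G ≤ det G`. Determinants are monotone
in the Loewner order: after writing `G = Bᵀ B` this reduces to `det A ≤ 1` for `0 ≤ A ≤ 1`, which
is read off the eigenvalues. For the standard symplectic matrix `det J = 1`.
-/

open Matrix

namespace Matrix

variable {n : Type*} [Fintype n]

theorem mulVec_dotProduct_mulVec_mulVec (C M : Matrix n n ℝ) (x y : n → ℝ) :
    (C *ᵥ x) ⬝ᵥ M *ᵥ (C *ᵥ y) = x ⬝ᵥ (Cᵀ * M * C) *ᵥ y := by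
  rw [Matrix.mul_assoc, ← mulVec_mulVec, dotProduct_mulVec x, vecMul_transpose, mulVec_mulVec]

theorem PosSemidef.transpose_mul_mul_same {A : Matrix n n ℝ} (hA : A.PosSemidef)
    (C : Matrix n n ℝ) : (Cᵀ * A * C).PosSemidef := by
  simpa only [conjTranspose_eq_transpose_of_trivial] using hA.conjTranspose_mul_mul_same C

variable [DecidableEq n]

theorem PosSemidef.det_le_one_of_dotProduct_mulVec_le {A : Matrix n n ℝ} (hA : A.PosSemidef)
    (h : ∀ x : n → ℝ, x ⬝ᵥ A *ᵥ x ≤ x ⬝ᵥ x) : A.det ≤ 1 := by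
  rw [hA.isHermitian.det_eq_prod_eigenvalues]
  refine Finset.prod_le_one (fun i _ ↦ hA.eigenvalues_nonneg i) fun i _ ↦ ?_
  set v := hA.isHermitian.eigenvectorBasis i
  have hv : (v : n → ℝ) ⬝ᵥ v = 1 := by
    have := real_inner_self_eq_norm_sq v
    rw [hA.isHermitian.eigenvectorBasis.orthonormal.1 i,
      EuclideanSpace.inner_eq_star_dotProduct] at this
    simpa using this
  simpa [hA.isHermitian.eigenvalues_eq i, hv] using h v

open scoped MatrixOrder in
theorem PosSemidef.det_le_det_of_dotProduct_mulVec_le {M G : Matrix n n ℝ} (hM : M.PosSemidef)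
    (hG : G.PosDef) (h : ∀ x : n → ℝ, x ⬝ᵥ M *ᵥ x ≤ x ⬝ᵥ G *ᵥ x) : M.det ≤ G.det := by
  obtain ⟨B, rfl⟩ := CStarAlgebra.nonneg_iff_eq_star_mul_self.mp hG.posSemidef.nonneg
  rw [star_eq_conjTranspose, conjTranspose_eq_transpose_of_trivial] at h hG ⊢
  have hdetG : (Bᵀ * B).det = B.det ^ 2 := by rw [det_mul, det_transpose, sq]
  have hB : IsUnit B.det := isUnit_iff_ne_zero.mpr <| by
    have := hG.det_pos
    rw [hdetG] at this
    exact pow_ne_zero_iff two_ne_zero |>.mp this.ne'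
  set C := B⁻¹
  have hBC : B * C = 1 := mul_nonsing_inv B hB
  have hCB : C.det * B.det = 1 := by rw [← det_mul, nonsing_inv_mul B hB, det_one]
  have hle : (Cᵀ * M * C).det ≤ 1 := by
    refine (hM.transpose_mul_mul_same C).det_le_one_of_dotProduct_mulVec_le fun x ↦ ?_
    calc x ⬝ᵥ (Cᵀ * M * C) *ᵥ x = (C *ᵥ x) ⬝ᵥ M *ᵥ (C *ᵥ x) :=
          (mulVec_dotProduct_mulVec_mulVec C M x x).symm
      _ ≤ (C *ᵥ x) ⬝ᵥ (Bᵀ * B) *ᵥ (C *ᵥ x) := h _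
      _ = x ⬝ᵥ x := by
        rw [mulVec_dotProduct_mulVec_mulVec, Matrix.mul_assoc, Matrix.mul_assoc, hBC,
          Matrix.mul_one, ← transpose_mul, hBC, transpose_one, one_mulVec]
  rw [det_mul, det_mul, det_transpose] at hle
  calc M.det = (C.det * B.det) ^ 2 * M.det := by rw [hCB, one_pow, one_mul]
    _ = C.det * M.det * C.det * B.det ^ 2 := by ring
    _ ≤ 1 * B.det ^ 2 := by gcongr
    _ = (Bᵀ * B).det := by rw [one_mul, hdetG]

theorem PosDef.dotProduct_transpose_mul_inv_mul_le {G J : Matrix n n ℝ} (hG : G.PosDef)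
    (h : ∀ ξ η : n → ℝ, (ξ ⬝ᵥ J *ᵥ η) ^ 2 ≤ (ξ ⬝ᵥ G *ᵥ ξ) * (η ⬝ᵥ G *ᵥ η)) (η : n → ℝ) :
    η ⬝ᵥ (Jᵀ * G⁻¹ * J) *ᵥ η ≤ η ⬝ᵥ G *ᵥ η := by
  set w := J *ᵥ η
  set q := w ⬝ᵥ G⁻¹ *ᵥ w
  have hq : 0 ≤ q := by simpa using hG.inv.posSemidef.dotProduct_mulVec_nonneg w
  have hg : 0 ≤ η ⬝ᵥ G *ᵥ η := by simpa using hG.posSemidef.dotProduct_mulVec_nonneg η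
  have hGξ : (G⁻¹ *ᵥ w) ⬝ᵥ G *ᵥ (G⁻¹ *ᵥ w) = q := by
    rw [mulVec_mulVec _ G, mul_nonsing_inv G ((isUnit_iff_isUnit_det G).mp hG.isUnit),
      one_mulVec, dotProduct_comm]
  have hsharp := h (G⁻¹ *ᵥ w) η
  rw [dotProduct_comm, hGξ] at hsharp
  rw [← mulVec_dotProduct_mulVec_mulVec]
  nlinarith

theorem PosDef.abs_det_le_det_of_sq_dotProduct_mulVec_le {G J : Matrix n n ℝ} (hG : G.PosDef)
    (h : ∀ ξ η : n → ℝ, (ξ ⬝ᵥ J *ᵥ η) ^ 2 ≤ (ξ ⬝ᵥ G *ᵥ ξ) * (η ⬝ᵥ G *ᵥ η)) :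
    |J.det| ≤ G.det := by
  have hle := (hG.inv.posSemidef.transpose_mul_mul_same J).det_le_det_of_dotProduct_mulVec_le hG
    (hG.dotProduct_transpose_mul_inv_mul_le h)
  rw [det_mul, det_mul, det_transpose, det_nonsing_inv, Ring.inverse_eq_inv,
    mul_right_comm, ← sq, ← div_eq_mul_inv, div_le_iff₀ hG.det_pos, ← sq] at hle
  exact abs_le_of_sq_le_sq hle hG.det_pos.le

end Matrix

/-- if `G` is a positive-definite symmetric bilinear form on the standard
symplectic space `ℝ^{2d}` (Gram matrix in a symplectic basis, where `ω` has matrix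
`Ω = [[0,1],[-1,0]]`) satisfying `G(ξ,ξ)G(η,η) ≥ ω(ξ,η)²` for all `ξ, η`, then
`det G ≥ 1`; i.e. `Vol(G) ≥ Vol(ω)`. -/
theorem det_ge_one_of_symplectic_lower_bound {d : ℕ}
    (G : Matrix (Fin d ⊕ Fin d) (Fin d ⊕ Fin d) ℝ)
    (hG : G.PosDef)
    (hGω : ∀ ξ η : Fin d ⊕ Fin d → ℝ,
      (ξ ⬝ᵥ (Matrix.fromBlocks 0 1 (-1) 0) *ᵥ η) ^ 2 ≤ (ξ ⬝ᵥ G *ᵥ ξ) * (η ⬝ᵥ G *ᵥ η)) :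
    1 ≤ G.det := by
  have hΩ : (fromBlocks 0 1 (-1) 0 : Matrix (Fin d ⊕ Fin d) (Fin d ⊕ Fin d) ℝ) = -J (Fin d) ℝ := by
    simp [J, fromBlocks_neg]
  have hdetΩ : (-J (Fin d) ℝ).det = 1 :=
    SymplecticGroup.det_eq_one <| SymplecticGroup.neg_mem <| SymplecticGroup.J_mem (Fin d) ℝ
  simpa [hΩ, hdetΩ] using hG.abs_det_le_det_of_sq_dotProduct_mulVec_le hGω
end
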